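/- arXiv:0706.2483 — 3 statements merged into one kernel-verified Lean document; each statement's English description precedes it below -/
import Mathlib

section
/- Let E be a normed space, v_1,...,v_n ∈ E, and define σ(x) = sup { (Σ_i φ(x_i v_i)^2)^{1/2} : φ ∈ E*, ‖φ‖* ≤ 1 } and |||x||| = E_ε ‖Σ_i ε_i x_i v_i‖ (expectation over uniform independent signs). Then there is a universal constant C_2 > 0 (one may take C_2 = √2) such that σ(x) ≤ C_2 · |||x||| for all x ∈ ℝ^n. -/
/-! For `‖φ‖ ≤ 1` put `a i = φ (x i • v i)`; then `|∑ εᵢ aᵢ| ≤ ‖∑ εᵢ xᵢ vᵢ‖`, so it suffices to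
prove Szarek's inequality `(∑ aᵢ²)^(1/2) ≤ √2 · 𝔼 |∑ εᵢ aᵢ|`.

Let `f ε = |∑ εᵢ aᵢ|` on the cube, with Walsh coefficients `c S`. Flipping one sign changes the
sum by `2 εᵢ aᵢ`, so by the triangle inequality `∑ᵢ f (flip i ε) ≥ (n - 2) f ε`; in Walsh terms
this says `∑ |S| c_S² ≤ ∑ c_S²`. As `f` is even, `c_S = 0` for odd `|S|`, so the left side is at
least `2 ∑_{S ≠ ∅} c_S²`, whence `∑ c_S² ≤ 2 c_∅²`. By Parseval this is `𝔼 f² ≤ 2 (𝔼 f)²`, and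
`𝔼 f² = ∑ aᵢ²`. -/

open Finset

namespace BooleanCube

def rademacher (b : Bool) : ℝ := if b then 1 else -1

@[simp] lemma rademacher_mul_self (b : Bool) : rademacher b * rademacher b = 1 := by
  cases b <;> simp [rademacher]

@[simp] lemma rademacher_not (b : Bool) : rademacher (!b) = -rademacher b := by
  cases b <;> simp [rademacher]

variable {ι : Type*}

def walsh (S : Finset ι) (ε : ι → Bool) : ℝ := ∏ i ∈ S, rademacher (ε i)

lemma walsh_not_comp (S : Finset ι) (ε : ι → Bool) :
    walsh S (not ∘ ε) = (-1) ^ #S * walsh S ε := by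
  simp [walsh, ← prod_const, ← prod_mul_distrib]

section flip

variable [DecidableEq ι]

def flipAt (i : ι) (ε : ι → Bool) : ι → Bool := Function.update ε i (!ε i)

lemma flipAt_involutive (i : ι) : Function.Involutive (flipAt i) := by
  intro ε
  simp [flipAt]

@[simp] lemma flipAt_apply_self (i : ι) (ε : ι → Bool) : flipAt i ε i = !ε i := by
  simp [flipAt]

@[simp] lemma flipAt_apply_of_ne {i j : ι} (h : j ≠ i) (ε : ι → Bool) : flipAt i ε j = ε j := by
  simp [flipAt, h]

lemma walsh_flipAt (S : Finset ι) (i : ι) (ε : ι → Bool) :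
    walsh S (flipAt i ε) = (if i ∈ S then -1 else 1) * walsh S ε := by
  have hrest : ∏ j ∈ S.erase i, rademacher (flipAt i ε j) = ∏ j ∈ S.erase i, rademacher (ε j) :=
    prod_congr rfl fun j hj => by rw [flipAt_apply_of_ne (ne_of_mem_erase hj)]
  split_ifs with h
  · rw [walsh, walsh, ← mul_prod_erase S _ h, ← mul_prod_erase S _ h, hrest]
    simp
  · rw [one_mul, walsh, walsh]
    exact prod_congr rfl fun j hj => by rw [flipAt_apply_of_ne (ne_of_mem_of_not_mem hj h)]

end flip

section fourier

variable [Fintype ι]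

lemma sum_walsh_mul_walsh (ε δ : ι → Bool) :
    ∑ S, walsh S ε * walsh S δ = if ε = δ then 2 ^ Fintype.card ι else 0 := by
  have hprod : ∑ S, walsh S ε * walsh S δ = ∏ i, (1 + rademacher (ε i) * rademacher (δ i)) := by
    simp_rw [prod_one_add, powerset_univ, walsh, prod_mul_distrib]
  rw [hprod]
  split_ifs with h
  · subst h
    norm_num [prod_const]
  · obtain ⟨i, hi⟩ := Function.ne_iff.mp h
    refine prod_eq_zero (mem_univ i) ?_
    revert hi
    cases ε i <;> cases δ i <;> simp [rademacher]

variable [DecidableEq ι]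

def walshCoeff (f : (ι → Bool) → ℝ) (S : Finset ι) : ℝ := ∑ ε, f ε * walsh S ε

lemma walshCoeff_empty (f : (ι → Bool) → ℝ) : walshCoeff f ∅ = ∑ ε, f ε := by
  simp [walshCoeff, walsh]

lemma sum_walshCoeff_mul_walshCoeff (u v : (ι → Bool) → ℝ) :
    ∑ S, walshCoeff u S * walshCoeff v S = 2 ^ Fintype.card ι * ∑ ε, u ε * v ε := by
  simp only [walshCoeff, sum_mul_sum, sum_comm (γ := Finset ι), mul_mul_mul_comm _ (walsh _ _),
    ← mul_sum, sum_walsh_mul_walsh, mul_ite, mul_zero, sum_ite_eq, mem_univ, if_true]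
  simp only [mul_sum]
  refine sum_congr rfl fun ε _ => by ring

lemma two_mul_sub_le_sum_card_mul_sq (c : Finset ι → ℝ) (hodd : ∀ S, Odd #S → c S = 0) :
    2 * (∑ S, c S ^ 2 - c ∅ ^ 2) ≤ ∑ S, #S * c S ^ 2 := by
  rw [← sum_erase_add _ _ (mem_univ ∅), add_sub_cancel_right, mul_sum]
  refine (sum_le_sum fun S hS => ?_).trans (sum_le_sum_of_subset_of_nonneg (erase_subset _ _)
    fun S _ _ => by positivity)
  obtain heven | hodd' := Nat.even_or_odd #S
  · have : 2 ≤ #S := by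
      obtain ⟨k, hk⟩ := heven
      have := card_pos.mpr (nonempty_of_ne_empty (ne_of_mem_erase hS))
      omega
    gcongr
    exact_mod_cast this
  · simp [hodd S hodd']

lemma walshCoeff_comp_flipAt (f : (ι → Bool) → ℝ) (i : ι) (S : Finset ι) :
    walshCoeff (f ∘ flipAt i) S = (if i ∈ S then -1 else 1) * walshCoeff f S := by
  rw [walshCoeff, ← (flipAt_involutive i).bijective.sum_comp, walshCoeff, mul_sum]
  refine sum_congr rfl fun ε _ => ?_
  rw [Function.comp_apply, flipAt_involutive i ε, walsh_flipAt]
  ring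

lemma walshCoeff_eq_zero_of_odd (f : (ι → Bool) → ℝ) (heven : ∀ ε, f (not ∘ ε) = f ε)
    {S : Finset ι} (hS : Odd #S) : walshCoeff f S = 0 := by
  have hinv : Function.Involutive (fun ε : ι → Bool => not ∘ ε) := fun ε => by
    funext i
    simp
  have h := hinv.bijective.sum_comp (fun ε => f ε * walsh S ε)
  simp only [heven, walsh_not_comp, hS.neg_one_pow, neg_one_mul, mul_neg, sum_neg_distrib] at h
  rw [walshCoeff]
  linarith

lemma sum_ite_mem_neg_one_one (S : Finset ι) :
    ∑ i, (if i ∈ S then (-1 : ℝ) else 1) = Fintype.card ι - 2 * #S := by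
  rw [sum_ite, sum_const, sum_const, filter_mem_eq_inter, univ_inter, filter_not,
    filter_mem_eq_inter, univ_inter, card_univ_sdiff]
  simp [Nat.cast_sub (card_le_univ S)]
  ring

lemma sum_card_sub_two_mul_card_mul_walshCoeff_sq (f : (ι → Bool) → ℝ) :
    ∑ S, ((Fintype.card ι : ℝ) - 2 * #S) * walshCoeff f S ^ 2
      = 2 ^ Fintype.card ι * ∑ ε, f ε * ∑ i, f (flipAt i ε) := by
  calc ∑ S, ((Fintype.card ι : ℝ) - 2 * #S) * walshCoeff f S ^ 2
      = ∑ i, ∑ S, walshCoeff f S * walshCoeff (f ∘ flipAt i) S := by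
        simp_rw [← sum_ite_mem_neg_one_one, sum_mul, walshCoeff_comp_flipAt]
        rw [sum_comm]
        exact sum_congr rfl fun i _ => sum_congr rfl fun S _ => by ring
    _ = ∑ i, 2 ^ Fintype.card ι * ∑ ε, f ε * f (flipAt i ε) := by
        simp_rw [sum_walshCoeff_mul_walshCoeff]
        rfl
    _ = 2 ^ Fintype.card ι * ∑ ε, f ε * ∑ i, f (flipAt i ε) := by
        rw [← mul_sum, sum_comm]
        simp_rw [mul_sum]

theorem pow_card_mul_sum_sq_le_two_mul_sq_sum (f : (ι → Bool) → ℝ) (hf : ∀ ε, 0 ≤ f ε)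
    (heven : ∀ ε, f (not ∘ ε) = f ε)
    (hlap : ∀ ε, (Fintype.card ι - 2) * f ε ≤ ∑ i, f (flipAt i ε)) :
    2 ^ Fintype.card ι * ∑ ε, f ε ^ 2 ≤ 2 * (∑ ε, f ε) ^ 2 := by
  set c := walshCoeff f
  have hplancherel : ∑ S, c S ^ 2 = 2 ^ Fintype.card ι * ∑ ε, f ε ^ 2 := by
    simpa [sq] using sum_walshCoeff_mul_walshCoeff f f
  have hspectral : Fintype.card ι * ∑ S, c S ^ 2 - 2 * ∑ S, #S * c S ^ 2
      = 2 ^ Fintype.card ι * ∑ ε, f ε * ∑ i, f (flipAt i ε) := by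
    rw [← sum_card_sub_two_mul_card_mul_walshCoeff_sq, mul_sum, mul_sum, ← sum_sub_distrib]
    exact sum_congr rfl fun S _ => by ring
  have hlap_sum : (Fintype.card ι - 2) * ∑ ε, f ε ^ 2 ≤ ∑ ε, f ε * ∑ i, f (flipAt i ε) := by
    rw [mul_sum]
    refine sum_le_sum fun ε _ => ?_
    rw [sq, mul_left_comm]
    exact mul_le_mul_of_nonneg_left (hlap ε) (hf ε)
  have hhigh := two_mul_sub_le_sum_card_mul_sq c fun S hS => walshCoeff_eq_zero_of_odd f heven hS
  have := mul_le_mul_of_nonneg_left hlap_sum (pow_nonneg zero_le_two (Fintype.card ι))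
  rw [← hplancherel, ← walshCoeff_empty]
  nlinarith

end fourier

variable [Fintype ι]

def rademacherSum (a : ι → ℝ) (ε : ι → Bool) : ℝ := ∑ i, rademacher (ε i) * a i

lemma rademacherSum_not_comp (a : ι → ℝ) (ε : ι → Bool) :
    rademacherSum a (not ∘ ε) = -rademacherSum a ε := by
  simp [rademacherSum]

variable [DecidableEq ι]

lemma rademacherSum_flipAt (a : ι → ℝ) (i : ι) (ε : ι → Bool) :
    rademacherSum a (flipAt i ε) = rademacherSum a ε - 2 * (rademacher (ε i) * a i) := by
  rw [rademacherSum, rademacherSum, ← sum_erase_add _ _ (mem_univ i),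
    ← sum_erase_add _ _ (mem_univ i), sum_congr rfl fun j hj => by
      rw [flipAt_apply_of_ne (ne_of_mem_erase hj)], flipAt_apply_self, rademacher_not]
  ring

lemma card_sub_two_mul_abs_rademacherSum_le (a : ι → ℝ) (ε : ι → Bool) :
    (Fintype.card ι - 2) * |rademacherSum a ε| ≤ ∑ i, |rademacherSum a (flipAt i ε)| := by
  have hsum : ∑ i, rademacherSum a (flipAt i ε) = (Fintype.card ι - 2) * rademacherSum a ε := by
    simp_rw [rademacherSum_flipAt, sum_sub_distrib, ← mul_sum, sum_const, card_univ, nsmul_eq_mul]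
    rw [← rademacherSum]
    ring
  calc (Fintype.card ι - 2) * |rademacherSum a ε|
      ≤ |(Fintype.card ι - 2) * rademacherSum a ε| := by
        rw [abs_mul]
        exact mul_le_mul_of_nonneg_right (le_abs_self _) (abs_nonneg _)
    _ ≤ ∑ i, |rademacherSum a (flipAt i ε)| := hsum ▸ abs_sum_le_sum_abs _ _

lemma sum_rademacher_mul_rademacher (i j : ι) :
    ∑ ε : ι → Bool, rademacher (ε i) * rademacher (ε j)
      = if i = j then 2 ^ Fintype.card ι else 0 := by
  split_ifs with h
  · simp [h]
  · have hflip := (flipAt_involutive j).bijective.sum_comp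
      fun ε : ι → Bool => rademacher (ε i) * rademacher (ε j)
    simp only [flipAt_apply_of_ne h, flipAt_apply_self, rademacher_not, mul_neg,
      sum_neg_distrib] at hflip
    linarith

lemma sum_rademacherSum_sq (a : ι → ℝ) :
    ∑ ε, rademacherSum a ε ^ 2 = 2 ^ Fintype.card ι * ∑ i, a i ^ 2 := by
  calc ∑ ε, rademacherSum a ε ^ 2
      = ∑ i, ∑ j, a i * a j * ∑ ε : ι → Bool, rademacher (ε i) * rademacher (ε j) := by
        simp_rw [rademacherSum, sq, sum_mul_sum, mul_sum]
        rw [sum_comm]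
        refine sum_congr rfl fun i _ => ?_
        rw [sum_comm]
        exact sum_congr rfl fun j _ => sum_congr rfl fun ε _ => by ring
    _ = 2 ^ Fintype.card ι * ∑ i, a i ^ 2 := by
        simp [sum_rademacher_mul_rademacher, mul_sum, sq, mul_comm]

theorem sqrt_sum_sq_le_sqrt_two_mul_sum_abs_rademacherSum (a : ι → ℝ) :
    √(∑ i, a i ^ 2) ≤ √2 * ((∑ ε, |rademacherSum a ε|) / 2 ^ Fintype.card ι) := by
  have hkey := pow_card_mul_sum_sq_le_two_mul_sq_sum (fun ε => |rademacherSum a ε|)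
    (fun ε => abs_nonneg _) (fun ε => by simp only [rademacherSum_not_comp, abs_neg])
    (card_sub_two_mul_abs_rademacherSum_le a)
  simp only [sq_abs, sum_rademacherSum_sq] at hkey
  rw [← Real.sqrt_sq (by positivity : 0 ≤ (∑ ε, |rademacherSum a ε|) / 2 ^ Fintype.card ι),
    ← Real.sqrt_mul zero_le_two]
  refine Real.sqrt_le_sqrt ?_
  rw [div_pow, mul_div_assoc', le_div_iff₀ (by positivity)]
  nlinarith

end BooleanCube

/-- `σ(x) ≤ √2 · |||x|||` for all `x ∈ ℝ^n`. -/
theorem sigma_le_sqrt_two_mul_tripleNorm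
    {E : Type*} [NormedAddCommGroup E] [NormedSpace ℝ E]
    (n : ℕ) (v : Fin n → E)
    (σ T : (Fin n → ℝ) → ℝ)
    (hσ : ∀ x, σ x = sSup { s : ℝ | ∃ φ : E →L[ℝ] ℝ, ‖φ‖ ≤ 1 ∧
        s = Real.sqrt (∑ i, (φ (x i • v i)) ^ 2) })
    (hT : ∀ x, T x = (∑ ε : Fin n → Bool,
        ‖∑ i, ((if ε i then (1:ℝ) else -1) * x i) • v i‖) / 2 ^ n) :
    ∀ x, σ x ≤ Real.sqrt 2 * T x := by
  intro x
  rw [hσ x]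
  refine Real.sSup_le ?_ (by rw [hT x]; positivity)
  rintro s ⟨φ, hφ, rfl⟩
  refine (BooleanCube.sqrt_sum_sq_le_sqrt_two_mul_sum_abs_rademacherSum
    fun i => φ (x i • v i)).trans ?_
  rw [hT x, Fintype.card_fin]
  gcongr with ε
  have hφε : BooleanCube.rademacherSum (fun i => φ (x i • v i)) ε
      = φ (∑ i, ((if ε i then (1:ℝ) else -1) * x i) • v i) := by
    simp only [BooleanCube.rademacherSum, BooleanCube.rademacher, map_sum, mul_smul, map_smul,
      smul_eq_mul]
  rw [hφε, ← Real.norm_eq_abs]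
  exact (φ.le_of_opNorm_le hφ _).trans_eq (one_mul _)
end

section
/- (Talagrand's concentration, expectation form) Let (E, ‖·‖) be a normed space, w_1,...,w_n ∈ E, and ε_1,...,ε_n independent uniform random signs. Set σ^2 = sup{ Σ_i φ(w_i)^2 : φ ∈ E*, ‖φ‖* ≤ 1 }. Then there exist universal constants C_1, c_1 > 0 such that for every t > 0, P{ | ‖Σ_i ε_i w_i‖ − E‖Σ_i ε_i w_i‖ | ≥ t } ≤ C_1 exp(−c_1 t^2/σ^2). -/
/-!
For a finite set `A` of points of `αⁿ`, let `D(x, A)` be the squared Euclidean distance from the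
origin to the convex hull of the mismatch vectors `(𝟙[xᵢ ≠ yᵢ])ᵢ`, `y ∈ A` (Talagrand's convex
distance). By induction on `n`, cutting `A` into its sections and its projection and interpolating
between the two bounds with Hölder's inequality, `𝔼 exp (D(·, A) / 8) ≤ 1 / ℙ(A)`.

The map `ε ↦ ‖∑ εᵢ wᵢ‖` is the restriction to the cube of a convex function which is
`σ`-Lipschitz for the Euclidean norm (Hahn–Banach and Cauchy–Schwarz). By convexity it is at most
`m` on the convex hull of the sign vectors of `A = {f ≤ m}`, and the point of that hull realising
`D(x, A)` lies at distance `2 √D(x, A)` from `x`. So `f ≤ m + 2σ √D(·, A)`, whence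
`ℙ(f ≥ m + t) ℙ(f ≤ m) ≤ exp (-t² / 32σ²)`. This gives sub-Gaussian
tails around a median, and summing these tails shows that the mean lies within `O(σ)` of the
median.
-/

open scoped Classical

open Finset Real

noncomputable section

lemma exp_le_one_add_add_sq {x : ℝ} (hx : |x| ≤ 1) : exp x ≤ 1 + x + x ^ 2 := by
  linarith [le_abs_self (exp x - 1 - x), abs_exp_sub_one_sub_id_le hx]

lemma exists_exp_mul_rpow_add_inv_le_two {r : ℝ} (hr : 1 ≤ r) :
    ∃ l ∈ Set.Icc (0 : ℝ) 1, exp ((1 - l) ^ 2 / 8) * r ^ l + r⁻¹ ≤ 2 := by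
  obtain ⟨s, hs, rfl⟩ : ∃ s, 0 ≤ s ∧ exp s = r := ⟨log r, log_nonneg hr, exp_log (by linarith)⟩
  simp_rw [← exp_mul, ← exp_add, ← exp_neg]
  rcases le_or_gt s (1 / 4) with hs4 | hs4
  · refine ⟨1 - 4 * s, ⟨by linarith, by linarith⟩, ?_⟩
    have hx : (1 - (1 - 4 * s)) ^ 2 / 8 + s * (1 - 4 * s) = s - 2 * s ^ 2 := by ring
    rw [hx]
    have h₁ := exp_le_one_add_add_sq (x := s - 2 * s ^ 2) (abs_le.2 ⟨by nlinarith, by nlinarith⟩)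
    have h₂ := exp_le_one_add_add_sq (x := -s) (abs_le.2 ⟨by linarith, by linarith⟩)
    have h₃ : (s - 2 * s ^ 2) ^ 2 ≤ s ^ 2 := by
      have : (s - 2 * s ^ 2) ^ 2 = s ^ 2 * (1 - 2 * s) ^ 2 := by ring
      rw [this]
      nlinarith [mul_nonneg (sq_nonneg s) (mul_nonneg hs (by linarith : 0 ≤ 1 - s))]
    nlinarith
  · refine ⟨0, ⟨le_rfl, zero_le_one⟩, ?_⟩
    have h₁ := exp_le_one_add_add_sq (x := (1 - 0) ^ 2 / 8 + s * 0) (by norm_num [abs_le])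
    have h₂ := exp_le_one_add_add_sq (x := -(1 / 4)) (by norm_num [abs_le])
    have h₃ : exp (-s) ≤ exp (-(1 / 4)) := exp_le_exp.2 (by linarith)
    norm_num at h₁ h₂ ⊢
    linarith

lemma sum_rpow_mul_rpow_le {ι : Type*} (s : Finset ι) {f g : ι → ℝ} (hf : ∀ i ∈ s, 0 ≤ f i)
    (hg : ∀ i ∈ s, 0 ≤ g i) {l : ℝ} (hl : l ∈ Set.Icc (0 : ℝ) 1) :
    ∑ i ∈ s, f i ^ l * g i ^ (1 - l) ≤ (∑ i ∈ s, f i) ^ l * (∑ i ∈ s, g i) ^ (1 - l) := by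
  rcases hl.1.eq_or_lt with rfl | hl₀
  · simp
  rcases hl.2.eq_or_lt with rfl | hl₁
  · simp
  have hholder := inner_le_Lp_mul_Lq_of_nonneg s (HolderConjugate.inv_one_sub_inv hl₀ hl₁)
    (fun i hi => rpow_nonneg (hf i hi) l) (fun i hi => rpow_nonneg (hg i hi) (1 - l))
  rwa [sum_congr rfl fun i hi => rpow_rpow_inv (hf i hi) hl₀.ne',
    sum_congr rfl fun i hi => rpow_rpow_inv (hg i hi) (sub_pos.2 hl₁).ne', one_div, one_div,
    inv_inv, inv_inv] at hholder

section ConvexDistance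

variable {ι α : Type*}

def mismatch (x y : ι → α) : ι → ℝ := fun i => if x i = y i then 0 else 1

def convexDistSq [Fintype ι] (A : Finset (ι → α)) (x : ι → α) : ℝ :=
  sInf ((fun ν : ι → ℝ => ∑ i, ν i ^ 2) '' convexHull ℝ (mismatch x '' A))

variable {A : Finset (ι → α)} {x : ι → α} {ν : ι → ℝ}

lemma convexHull_mismatch_subset_Icc : convexHull ℝ (mismatch x '' A) ⊆ Set.Icc 0 1 :=
  convexHull_min
    (by rintro _ ⟨y, -, rfl⟩; constructor <;> intro i <;> simp only [mismatch] <;> split_ifs <;>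
      norm_num)
    (convex_Icc 0 1)

variable [Fintype ι]

lemma convexDistSq_nonneg : 0 ≤ convexDistSq A x :=
  Real.sInf_nonneg (by rintro _ ⟨μ, -, rfl⟩; positivity)

lemma convexDistSq_le (hν : ν ∈ convexHull ℝ (mismatch x '' A)) :
    convexDistSq A x ≤ ∑ i, ν i ^ 2 :=
  csInf_le ⟨0, by rintro _ ⟨μ, -, rfl⟩; positivity⟩ ⟨ν, hν, rfl⟩

lemma exists_sum_sq_eq_convexDistSq (hA : A.Nonempty) :
    ∃ ν ∈ convexHull ℝ (mismatch x '' A), ∑ i, ν i ^ 2 = convexDistSq A x := by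
  obtain ⟨ν, hν, hmin⟩ :=
    ((A.finite_toSet.image (mismatch x)).isCompact_convexHull ℝ).exists_isMinOn
      ((Finset.coe_nonempty.2 hA).image (mismatch x)).convexHull
      (by fun_prop : Continuous fun ν : ι → ℝ => ∑ i, ν i ^ 2).continuousOn
  refine ⟨ν, hν, Eq.symm <| IsLeast.csInf_eq ⟨⟨ν, hν, rfl⟩, ?_⟩⟩
  rintro _ ⟨μ, hμ, rfl⟩
  exact hmin hμ

end ConvexDistance

section ConsInduction

variable {α : Type*} {n : ℕ} {A : Finset (Fin (n + 1) → α)} {ω : α} {z : Fin n → α}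

lemma exists_cons_mem_convexHull_mismatch {ν : Fin n → ℝ}
    (hν : ν ∈ convexHull ℝ (mismatch z '' (A.image Fin.tail))) :
    ∃ t ∈ Set.Icc (0 : ℝ) 1,
      (Fin.cons t ν : Fin (n + 1) → ℝ) ∈ convexHull ℝ (mismatch (Fin.cons ω z) '' A) := by
  let T : (Fin (n + 1) → ℝ) →ₗ[ℝ] Fin n → ℝ := LinearMap.funLeft ℝ ℝ Fin.succ
  have hsub : mismatch z '' (A.image Fin.tail) ⊆ T '' (mismatch (Fin.cons ω z) '' A) := by
    rintro _ ⟨y, hy, rfl⟩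
    obtain ⟨a, ha, rfl⟩ := mem_image.1 hy
    exact ⟨_, ⟨a, ha, rfl⟩, by ext i; simp [T, mismatch, Fin.tail]; congr⟩
  obtain ⟨μ, hμ, rfl⟩ := T.image_convexHull _ ▸ convexHull_mono hsub hν
  have hμ01 := convexHull_mismatch_subset_Icc hμ
  refine ⟨μ 0, ⟨hμ01.1 0, hμ01.2 0⟩, ?_⟩
  convert hμ
  exact Fin.cons_self_tail μ

lemma convexDistSq_cons_le_one_add (hA : A.Nonempty) :
    convexDistSq A (Fin.cons ω z) ≤ 1 + convexDistSq (A.image Fin.tail) z := by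
  obtain ⟨ν, hν, hνD⟩ := exists_sum_sq_eq_convexDistSq (x := z) (hA.image Fin.tail)
  obtain ⟨t, ht, hmem⟩ := exists_cons_mem_convexHull_mismatch (ω := ω) hν
  refine (convexDistSq_le hmem).trans ?_
  rw [Fin.sum_univ_succ, ← hνD]
  simp only [Fin.cons_zero, Fin.cons_succ]
  nlinarith [ht.1, ht.2]

variable [Fintype α]

def consSection (A : Finset (Fin (n + 1) → α)) (ω : α) : Finset (Fin n → α) :=
  {y | Fin.cons ω y ∈ A}

lemma consSection_subset_image_tail : consSection A ω ⊆ A.image Fin.tail :=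
  fun _ hy => mem_image.2 ⟨_, (mem_filter.1 hy).2, Fin.tail_cons _ _⟩

lemma sum_eq_sum_sum_cons {M : Type*} [AddCommMonoid M] (f : (Fin (n + 1) → α) → M) :
    ∑ x, f x = ∑ ω, ∑ y, f (Fin.cons ω y) := by
  rw [← (Fin.consEquiv fun _ => α).sum_comp, Fintype.sum_prod_type]
  rfl

lemma sum_card_consSection : ∑ ω, #(consSection A ω) = #A := by
  simp only [consSection, card_filter]
  rw [← sum_eq_sum_sum_cons (fun x => if x ∈ A then 1 else 0)]
  simp

lemma cons_zero_mem_convexHull_mismatch {ν : Fin n → ℝ}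
    (hν : ν ∈ convexHull ℝ (mismatch z '' consSection A ω)) :
    (Fin.cons 0 ν : Fin (n + 1) → ℝ) ∈ convexHull ℝ (mismatch (Fin.cons ω z) '' A) := by
  let L := (Fin.consLinearEquiv ℝ fun _ => ℝ).toLinearMap ∘ₗ LinearMap.inr ℝ ℝ (Fin n → ℝ)
  have hL : ∀ μ, L μ = Fin.cons 0 μ := fun _ => rfl
  have hsub : L '' (mismatch z '' consSection A ω) ⊆ mismatch (Fin.cons ω z) '' A := by
    rintro _ ⟨_, ⟨y, hy, rfl⟩, rfl⟩
    refine ⟨Fin.cons ω y, (mem_filter.1 hy).2, ?_⟩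
    ext i
    cases i using Fin.cases <;> simp [hL, mismatch]
  rw [← hL]
  exact convexHull_mono hsub (L.image_convexHull _ ▸ ⟨ν, hν, rfl⟩)

lemma convexDistSq_cons_le (hω : (consSection A ω).Nonempty) {l : ℝ}
    (hl : l ∈ Set.Icc (0 : ℝ) 1) :
    convexDistSq A (Fin.cons ω z) ≤ (1 - l) ^ 2 + l * convexDistSq (consSection A ω) z
      + (1 - l) * convexDistSq (A.image Fin.tail) z := by
  obtain ⟨ν₁, hν₁, h₁⟩ := exists_sum_sq_eq_convexDistSq (x := z) hω
  obtain ⟨ν₂, hν₂, h₂⟩ :=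
    exists_sum_sq_eq_convexDistSq (x := z) (hω.mono consSection_subset_image_tail)
  obtain ⟨t, ht, hmem⟩ := exists_cons_mem_convexHull_mismatch (ω := ω) hν₂
  have hmix := convex_convexHull ℝ _ (cons_zero_mem_convexHull_mismatch hν₁) hmem hl.1
    (sub_nonneg.2 hl.2) (add_sub_cancel l 1)
  refine (convexDistSq_le hmix).trans ?_
  rw [Fin.sum_univ_succ, ← h₁, ← h₂, mul_sum, mul_sum, add_assoc, ← sum_add_distrib]
  simp only [Pi.add_apply, Pi.smul_apply, Fin.cons_zero, Fin.cons_succ, smul_eq_mul]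
  have hl' : 0 ≤ l * (1 - l) := mul_nonneg hl.1 (sub_nonneg.2 hl.2)
  gcongr ?_ + ∑ i, ?_
  · have ht2 : t ^ 2 ≤ 1 := by nlinarith [ht.1, ht.2]
    nlinarith [mul_le_mul_of_nonneg_left ht2 (sq_nonneg (1 - l))]
  · nlinarith [mul_nonneg hl' (sq_nonneg (ν₁ i - ν₂ i))]

lemma sum_exp_convexDistSq_cons_le_holder (hω : (consSection A ω).Nonempty) {l : ℝ}
    (hl : l ∈ Set.Icc (0 : ℝ) 1) :
    ∑ z, exp (convexDistSq A (Fin.cons ω z) / 8)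
      ≤ exp ((1 - l) ^ 2 / 8) * ((∑ z, exp (convexDistSq (consSection A ω) z / 8)) ^ l
        * (∑ z, exp (convexDistSq (A.image Fin.tail) z / 8)) ^ (1 - l)) := by
  calc ∑ z, exp (convexDistSq A (Fin.cons ω z) / 8)
      ≤ ∑ z, exp ((1 - l) ^ 2 / 8) * (exp (convexDistSq (consSection A ω) z / 8) ^ l
          * exp (convexDistSq (A.image Fin.tail) z / 8) ^ (1 - l)) := by
        gcongr with z
        rw [← exp_mul, ← exp_mul, ← exp_add, ← exp_add]
        gcongr
        linarith [convexDistSq_cons_le (z := z) hω hl]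
    _ ≤ _ := by
        rw [← mul_sum]
        gcongr
        exact sum_rpow_mul_rpow_le _ (fun _ _ => (exp_pos _).le) (fun _ _ => (exp_pos _).le) hl

lemma sum_exp_convexDistSq_cons_le {N : ℝ}
    (ih : ∀ B : Finset (Fin n → α), B.Nonempty →
      (∑ z, exp (convexDistSq B z / 8)) * #B ≤ N ^ 2)
    (hA : A.Nonempty) (ω : α) :
    ∑ z, exp (convexDistSq A (Fin.cons ω z) / 8)
      ≤ N ^ 2 / #(A.image Fin.tail) * (2 - #(consSection A ω) / #(A.image Fin.tail)) := by
  set B := A.image Fin.tail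
  have hB : B.Nonempty := hA.image _
  have hb : (0 : ℝ) < #B := by exact_mod_cast hB.card_pos
  have hSB : ∑ z, exp (convexDistSq B z / 8) ≤ N ^ 2 / #B := (le_div_iff₀ hb).2 (ih B hB)
  rcases (consSection A ω).eq_empty_or_nonempty with hω | hω
  · have h8 : exp (1 / 8) ≤ 2 := by
      linarith [exp_le_one_add_add_sq (x := 1 / 8) (by norm_num [abs_le])]
    calc ∑ z, exp (convexDistSq A (Fin.cons ω z) / 8)
        ≤ ∑ z, exp (1 / 8) * exp (convexDistSq B z / 8) := by
          gcongr with z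
          rw [← exp_add]
          gcongr
          linarith [convexDistSq_cons_le_one_add (ω := ω) (z := z) hA]
      _ ≤ 2 * (N ^ 2 / #B) := by
          rw [← mul_sum]
          gcongr
      _ = _ := by simp [hω]; ring
  have ha : (0 : ℝ) < #(consSection A ω) := by exact_mod_cast hω.card_pos
  have hab : (#(consSection A ω) : ℝ) ≤ #B := by
    exact_mod_cast card_le_card consSection_subset_image_tail
  set a : ℝ := (#(consSection A ω) : ℝ)
  have hSω : ∑ z, exp (convexDistSq (consSection A ω) z / 8) ≤ N ^ 2 / a :=
    (le_div_iff₀ ha).2 (ih _ hω)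
  obtain ⟨l, hl, hscalar⟩ := exists_exp_mul_rpow_add_inv_le_two ((one_le_div ha).2 hab)
  have hc : 0 ≤ N ^ 2 / #B := by positivity
  calc ∑ z, exp (convexDistSq A (Fin.cons ω z) / 8)
      ≤ exp ((1 - l) ^ 2 / 8) * ((N ^ 2 / a) ^ l * (N ^ 2 / #B) ^ (1 - l)) := by
        refine (sum_exp_convexDistSq_cons_le_holder hω hl).trans ?_
        have hSB₀ := sum_nonneg fun z (_ : z ∈ univ) => (exp_pos (convexDistSq B z / 8)).le
        have hSω₀ := sum_nonneg fun z (_ : z ∈ univ) =>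
          (exp_pos (convexDistSq (consSection A ω) z / 8)).le
        gcongr
        · exact hl.1
        · linarith [hl.2]
    _ = N ^ 2 / #B * (exp ((1 - l) ^ 2 / 8) * (#B / a) ^ l) := by
        rw [show N ^ 2 / a = N ^ 2 / #B * (#B / a) by field_simp, mul_rpow hc (by positivity),
          mul_right_comm, ← rpow_add' hc (by norm_num), add_sub_cancel, rpow_one]
        ring
    _ ≤ N ^ 2 / #B * (2 - a / #B) := by
        gcongr
        rw [inv_div] at hscalar
        linarith

end ConsInduction

theorem sum_exp_convexDistSq_mul_card_le {α : Type*} [Fintype α] {n : ℕ}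
    (A : Finset (Fin n → α)) (hA : A.Nonempty) :
    (∑ x, exp (convexDistSq A x / 8)) * #A ≤ (Fintype.card (Fin n → α) : ℝ) ^ 2 := by
  induction n with
  | zero =>
    have hD : ∀ x, convexDistSq A x = 0 := fun x => by
      obtain ⟨ν, -, h⟩ := exists_sum_sq_eq_convexDistSq (x := x) hA
      simpa using h.symm
    simp [hD]
    exact_mod_cast card_le_univ A
  | succ n ih =>
    set N : ℝ := (Fintype.card (Fin n → α) : ℝ)
    set k : ℝ := (Fintype.card α : ℝ)
    have hb : (0 : ℝ) < #(A.image Fin.tail) := by exact_mod_cast (hA.image Fin.tail).card_pos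
    set b : ℝ := (#(A.image Fin.tail) : ℝ)
    calc (∑ x, exp (convexDistSq A x / 8)) * #A
        = (∑ ω, ∑ z, exp (convexDistSq A (Fin.cons ω z) / 8)) * #A := by
          rw [sum_eq_sum_sum_cons]
      _ ≤ (∑ ω, N ^ 2 / b * (2 - #(consSection A ω) / b)) * #A := by
          gcongr with ω
          exact sum_exp_convexDistSq_cons_le ih hA ω
      _ = N ^ 2 * (#A / b * (2 * k - #A / b)) := by
          rw [← sum_card_consSection (A := A)]
          simp only [← mul_sum, sum_sub_distrib, ← sum_div, sum_const, card_univ]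
          push_cast
          ring
      _ ≤ N ^ 2 * k ^ 2 := by
          gcongr
          nlinarith [sq_nonneg (k - #A / b)]
      _ = (Fintype.card (Fin (n + 1) → α) : ℝ) ^ 2 := by
          simp [N, k, pow_succ]
          ring

section FiniteConcentration

variable {X : Type*} [Fintype X]

/-- `ℙ(f ≥ m + t) ℙ(f ≤ m) ≤ exp (-t² / b)` for the uniform probability on `X`. -/
def LevelSetProductBound (f : X → ℝ) (b : ℝ) : Prop :=
  ∀ m t, 0 ≤ t →
    (#{x | m + t ≤ f x} : ℝ) * #{x | f x ≤ m} ≤ (Fintype.card X : ℝ) ^ 2 * exp (-t ^ 2 / b)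

lemma sum_le_two_mul_of_card_le_mul_exp (g : X → ℝ) {K : ℝ}
    (h : ∀ k : ℕ, (#{x | (k : ℝ) ≤ g x} : ℝ) ≤ K * exp (-k)) : ∑ x, g x ≤ 2 * K := by
  obtain ⟨N, hN⟩ := exists_nat_gt (∑ x, |g x|)
  have hgN : ∀ x, g x < N := fun x => (le_abs_self _).trans_lt
    ((single_le_sum (fun y _ => abs_nonneg (g y)) (mem_univ x)).trans_lt hN)
  have hlayer : ∀ x, g x ≤ #((range N).filter fun k : ℕ => (k : ℝ) ≤ g x) := by
    intro x
    rcases lt_or_ge (g x) 0 with hneg | hpos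
    · exact hneg.le.trans (Nat.cast_nonneg _)
    have hsub : range (⌊g x⌋₊ + 1) ⊆ (range N).filter fun k : ℕ => (k : ℝ) ≤ g x := by
      intro k hk
      have hk' : k ≤ ⌊g x⌋₊ := Nat.lt_succ_iff.1 (mem_range.1 hk)
      refine mem_filter.2 ⟨mem_range.2 ?_, (Nat.le_floor_iff hpos).1 hk'⟩
      exact_mod_cast (Nat.cast_le.2 hk').trans_lt ((Nat.floor_le hpos).trans_lt (hgN x))
    calc g x ≤ ⌊g x⌋₊ + 1 := (Nat.lt_floor_add_one _).le
      _ ≤ #((range N).filter fun k : ℕ => (k : ℝ) ≤ g x) := by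
        exact_mod_cast (card_range _).symm.trans_le (card_le_card hsub)
  have hK : 0 ≤ K := by simpa using (Nat.cast_nonneg _).trans (h 0)
  have hgeom : ∑ k ∈ range N, exp (-1) ^ k ≤ 2 := by
    rw [range_eq_Ico]
    refine (geom_sum_Ico_le_of_lt_one (exp_pos _).le (by linarith [exp_neg_one_lt_half])).trans ?_
    rw [pow_zero, div_le_iff₀ (by linarith [exp_neg_one_lt_half])]
    linarith [exp_neg_one_lt_half]
  calc ∑ x, g x ≤ ∑ x, (#((range N).filter fun k : ℕ => (k : ℝ) ≤ g x) : ℝ) :=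
        sum_le_sum fun x _ => hlayer x
    _ = ∑ k ∈ range N, (#{x | (k : ℝ) ≤ g x} : ℝ) := by
        simp only [card_filter, Nat.cast_sum]
        exact sum_comm
    _ ≤ ∑ k ∈ range N, K * exp (-1) ^ k := by
        refine sum_le_sum fun k _ => (h k).trans_eq ?_
        rw [← exp_nat_mul]
        ring_nf
    _ ≤ K * 2 := by rw [← mul_sum]; gcongr
    _ = 2 * K := mul_comm _ _

lemma le_two_mul_of_mul_le {a c N e : ℝ} (hN : 0 < N) (ha : 0 ≤ a) (hc : N ≤ 2 * c)
    (h : a * c ≤ N ^ 2 * e) : a ≤ 2 * N * e :=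
  le_of_mul_le_mul_left (by nlinarith) hN

variable [Nonempty X] (f : X → ℝ)

lemma exists_median : ∃ med : ℝ,
    (Fintype.card X : ℝ) ≤ 2 * #{x | f x ≤ med} ∧ (Fintype.card X : ℝ) ≤ 2 * #{x | med ≤ f x} := by
  set good : Finset X := {x | Fintype.card X ≤ 2 * #{y | f y ≤ f x}}
  obtain ⟨xmax, hxmax⟩ := Finite.exists_max f
  have hgood : good.Nonempty := ⟨xmax, by simp [good, hxmax]; omega⟩
  obtain ⟨x₀, hx₀, hmin⟩ := good.exists_min_image f hgood
  refine ⟨f x₀, by exact_mod_cast (mem_filter.1 hx₀).2, ?_⟩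
  by_contra! hlt
  have hsplit := card_filter_add_card_filter_not (s := univ) (fun y => f x₀ ≤ f y)
  simp only [not_le, card_univ] at hsplit
  have hlow : Fintype.card X ≤ 2 * #{y | f y < f x₀} := by
    have : 2 * #{y | f x₀ ≤ f y} < Fintype.card X := by exact_mod_cast hlt
    omega
  have hne : ({y | f y < f x₀} : Finset X).Nonempty := by
    rw [← card_pos]
    have := Fintype.card_pos (α := X)
    omega
  obtain ⟨y₀, hy₀, hymax⟩ := exists_max_image _ f hne
  have hy₀good : y₀ ∈ good := by
    refine mem_filter.2 ⟨mem_univ _, hlow.trans ?_⟩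
    gcongr 2 * ?_
    exact card_le_card fun y hy => mem_filter.2 ⟨mem_univ _, hymax y hy⟩
  exact (mem_filter.1 hy₀).2.not_ge (hmin y₀ hy₀good)

variable {f} {b med : ℝ}

lemma card_le_abs_sub_median_le (htail : LevelSetProductBound f b)
    (h₁ : (Fintype.card X : ℝ) ≤ 2 * #{x | f x ≤ med})
    (h₂ : (Fintype.card X : ℝ) ≤ 2 * #{x | med ≤ f x}) {t : ℝ} (ht : 0 ≤ t) :
    (#{x | t ≤ |f x - med|} : ℝ) ≤ 4 * Fintype.card X * exp (-t ^ 2 / b) := by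
  have hN : (0 : ℝ) < Fintype.card X := by exact_mod_cast Fintype.card_pos
  have hup := le_two_mul_of_mul_le hN (Nat.cast_nonneg _) h₁ (htail med t ht)
  have hlow := le_two_mul_of_mul_le (a := #{x | f x ≤ med - t}) hN (Nat.cast_nonneg _) h₂
    ((mul_comm _ _).trans_le (by simpa using htail (med - t) t ht))
  have hsub : ({x | t ≤ |f x - med|} : Finset X)
      ⊆ ({x | med + t ≤ f x} : Finset X) ∪ ({x | f x ≤ med - t} : Finset X) := by
    intro x hx
    simp only [mem_union, mem_filter, mem_univ, true_and] at hx ⊢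
    rcases le_abs'.1 hx with h | h
    · right; linarith
    · left; linarith
  calc (#{x | t ≤ |f x - med|} : ℝ) ≤ #{x | med + t ≤ f x} + #{x | f x ≤ med - t} := by
        exact_mod_cast (card_le_card hsub).trans (card_union_le _ _)
    _ ≤ _ := by linarith

lemma abs_mean_sub_median_le (hb : 0 < b) (htail : LevelSetProductBound f b)
    (h₁ : (Fintype.card X : ℝ) ≤ 2 * #{x | f x ≤ med})
    (h₂ : (Fintype.card X : ℝ) ≤ 2 * #{x | med ≤ f x}) :
    |(∑ x, f x) / Fintype.card X - med| ≤ 8 * √b := by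
  have hN : (0 : ℝ) < Fintype.card X := by exact_mod_cast Fintype.card_pos
  have hsb : 0 < √b := sqrt_pos.2 hb
  have hlayer : ∑ x, |f x - med| / √b ≤ 2 * (4 * Fintype.card X) := by
    refine sum_le_two_mul_of_card_le_mul_exp _ fun k => ?_
    have hk : (k : ℝ) ≤ k ^ 2 := by exact_mod_cast Nat.le_self_pow two_ne_zero k
    calc (#{x | (k : ℝ) ≤ |f x - med| / √b} : ℝ) = #{x | k * √b ≤ |f x - med|} := by
          simp_rw [le_div_iff₀ hsb]
      _ ≤ 4 * Fintype.card X * exp (-(k * √b) ^ 2 / b) :=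
          card_le_abs_sub_median_le htail h₁ h₂ (by positivity)
      _ ≤ 4 * Fintype.card X * exp (-k) := by
          rw [mul_pow, sq_sqrt hb.le, neg_div, mul_div_cancel_right₀ _ hb.ne']
          gcongr
  have hmean : (∑ x, f x) / Fintype.card X - med = (∑ x, (f x - med)) / Fintype.card X := by
    rw [sum_sub_distrib, sum_const, card_univ, nsmul_eq_mul]
    field_simp
  rw [hmean, abs_div, abs_of_pos hN, div_le_iff₀ hN]
  calc |∑ x, (f x - med)| ≤ ∑ x, |f x - med| := abs_sum_le_sum_abs _ _
    _ = √b * ∑ x, |f x - med| / √b := by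
        rw [mul_sum]
        exact sum_congr rfl fun x _ => by field_simp
    _ ≤ √b * (2 * (4 * Fintype.card X)) := by gcongr
    _ = 8 * √b * Fintype.card X := by ring

variable (f) in
theorem card_le_abs_sub_mean_div_card_le (hb : 0 < b) (htail : LevelSetProductBound f b)
    {t : ℝ} (ht : 0 ≤ t) :
    (#{x | t ≤ |f x - (∑ y, f y) / Fintype.card X|} : ℝ) / Fintype.card X
      ≤ exp 64 * exp (-t ^ 2 / (4 * b)) := by
  obtain ⟨med, h₁, h₂⟩ := exists_median f
  have hN : (0 : ℝ) < Fintype.card X := by exact_mod_cast Fintype.card_pos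
  have hmean := abs_mean_sub_median_le hb htail h₁ h₂
  rw [div_le_iff₀ hN]
  rcases lt_or_ge t (16 * √b) with hsmall | hlarge
  · have ht2 : t ^ 2 < 256 * b := by nlinarith [sq_sqrt hb.le, sqrt_nonneg b]
    have hone : 1 ≤ exp 64 * exp (-t ^ 2 / (4 * b)) := by
      rw [← exp_add]
      refine one_le_exp ?_
      have : t ^ 2 / (4 * b) ≤ 64 := by rw [div_le_iff₀ (by positivity)]; linarith
      linarith [neg_div (4 * b) (t ^ 2)]
    calc (#{x | t ≤ |f x - (∑ y, f y) / Fintype.card X|} : ℝ) ≤ Fintype.card X := by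
          exact_mod_cast card_le_univ _
      _ ≤ _ := le_mul_of_one_le_left hN.le hone
  have hsub : ({x | t ≤ |f x - (∑ y, f y) / Fintype.card X|} : Finset X)
      ⊆ ({x | t / 2 ≤ |f x - med|} : Finset X) := by
    intro x hx
    simp only [mem_filter, mem_univ, true_and] at hx ⊢
    linarith [abs_sub_le (f x) med ((∑ y, f y) / Fintype.card X),
      abs_sub_comm med ((∑ y, f y) / Fintype.card X)]
  calc (#{x | t ≤ |f x - (∑ y, f y) / Fintype.card X|} : ℝ)
      ≤ #{x | t / 2 ≤ |f x - med|} := by exact_mod_cast card_le_card hsub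
    _ ≤ 4 * Fintype.card X * exp (-(t / 2) ^ 2 / b) :=
        card_le_abs_sub_median_le htail h₁ h₂ (by linarith)
    _ = 4 * exp (-t ^ 2 / (4 * b)) * Fintype.card X := by ring_nf
    _ ≤ exp 64 * exp (-t ^ 2 / (4 * b)) * Fintype.card X := by
        gcongr
        linarith [add_one_le_exp (64 : ℝ)]

end FiniteConcentration

theorem levelSetProductBound_of_le_convexDistSq {α : Type*} [Fintype α] {n : ℕ}
    (f : (Fin n → α) → ℝ) {L : ℝ} (hL : 0 < L)
    (hf : ∀ m x, ({y | f y ≤ m} : Finset (Fin n → α)).Nonempty →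
      f x ≤ m + L * √(convexDistSq {y | f y ≤ m} x)) :
    LevelSetProductBound f (8 * L ^ 2) := by
  intro m t ht
  set A : Finset (Fin n → α) := {y | f y ≤ m}
  rcases A.eq_empty_or_nonempty with hA | hA
  · rw [hA]
    simp only [card_empty, Nat.cast_zero, mul_zero]
    positivity
  have hD : ∀ x ∈ ({x | m + t ≤ f x} : Finset _), t ^ 2 / (8 * L ^ 2) ≤ convexDistSq A x / 8 := by
    intro x hx
    have htD : t ≤ L * √(convexDistSq A x) := by linarith [(mem_filter.1 hx).2, hf m x hA]
    rw [div_le_div_iff₀ (by positivity) (by norm_num)]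
    nlinarith [sq_sqrt (convexDistSq_nonneg (A := A) (x := x)), pow_le_pow_left₀ ht htD 2]
  have hcount : (#{x | m + t ≤ f x} : ℝ) * exp (t ^ 2 / (8 * L ^ 2))
      ≤ ∑ x, exp (convexDistSq A x / 8) :=
    calc (#{x | m + t ≤ f x} : ℝ) * exp (t ^ 2 / (8 * L ^ 2))
        = ∑ x ∈ {x | m + t ≤ f x}, exp (t ^ 2 / (8 * L ^ 2)) := by rw [sum_const, nsmul_eq_mul]
      _ ≤ ∑ x ∈ {x | m + t ≤ f x}, exp (convexDistSq A x / 8) :=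
          sum_le_sum fun x hx => exp_le_exp.2 (hD x hx)
      _ ≤ ∑ x, exp (convexDistSq A x / 8) :=
          sum_le_sum_of_subset_of_nonneg (subset_univ _) fun _ _ _ => (exp_pos _).le
  rw [neg_div, exp_neg, ← div_eq_mul_inv, le_div_iff₀ (exp_pos _)]
  calc (#{x | m + t ≤ f x} : ℝ) * #A * exp (t ^ 2 / (8 * L ^ 2))
      = (#{x | m + t ≤ f x} : ℝ) * exp (t ^ 2 / (8 * L ^ 2)) * #A := by ring
    _ ≤ (∑ x, exp (convexDistSq A x / 8)) * #A := by gcongr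
    _ ≤ _ := sum_exp_convexDistSq_mul_card_le A hA

section SignVectors

variable {ι : Type*} [Fintype ι]

def signVec (ε : ι → Bool) : ι → ℝ := fun i => if ε i then 1 else -1

theorem le_add_mul_sqrt_convexDistSq {F : (ι → ℝ) → ℝ} (hF : ConvexOn ℝ Set.univ F) {K : ℝ}
    (hK : ∀ u v, F u ≤ F v + K * √(∑ i, (u i - v i) ^ 2)) {A : Finset (ι → Bool)}
    (hA : A.Nonempty) {m : ℝ} (hm : ∀ y ∈ A, F (signVec y) ≤ m) (x : ι → Bool) :
    F (signVec x) ≤ m + 2 * K * √(convexDistSq A x) := by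
  obtain ⟨ν, hν, hνD⟩ := exists_sum_sq_eq_convexDistSq (x := x) hA
  let Ψ : (ι → ℝ) →ᵃ[ℝ] ι → ℝ :=
    AffineMap.const ℝ _ (signVec x) + (LinearMap.mulLeft ℝ (-2 • signVec x)).toAffineMap
  have hΨ : ∀ μ, Ψ μ = signVec x + (-2 • signVec x) * μ := fun _ => rfl
  have hΨA : Ψ '' (mismatch x '' A) = signVec '' A := by
    rw [Set.image_image]
    refine Set.image_congr fun y _ => funext fun i => ?_
    simp only [hΨ, signVec, mismatch, Pi.add_apply, Pi.mul_apply, Pi.smul_apply]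
    cases x i <;> cases y i <;> norm_num
  have hΨν : Ψ ν ∈ convexHull ℝ (signVec '' A) := hΨA ▸ Ψ.image_convexHull _ ▸ ⟨ν, hν, rfl⟩
  obtain ⟨_, ⟨y, hy, rfl⟩, hle⟩ := hF.exists_ge_of_mem_convexHull (Set.subset_univ _) hΨν
  have hdist : ∑ i, (signVec x i - Ψ ν i) ^ 2 = (2 * √(convexDistSq A x)) ^ 2 := by
    rw [mul_pow, sq_sqrt convexDistSq_nonneg, ← hνD, mul_sum]
    refine sum_congr rfl fun i _ => ?_
    simp only [hΨ, signVec, Pi.add_apply, Pi.mul_apply, Pi.smul_apply]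
    split_ifs <;> ring
  have hlip := hK (signVec x) (Ψ ν)
  rw [hdist, sqrt_sq (by positivity)] at hlip
  linarith [hm y hy]

end SignVectors

section Rademacher

variable {E : Type*} [NormedAddCommGroup E] [NormedSpace ℝ E] {ι : Type*} [Fintype ι]

def weakVariance (w : ι → E) : ℝ :=
  sSup {s : ℝ | ∃ φ : E →L[ℝ] ℝ, ‖φ‖ ≤ 1 ∧ s = ∑ i, (φ (w i)) ^ 2}

variable (w : ι → E)

lemma weakVariance_nonneg : 0 ≤ weakVariance w :=
  Real.sSup_nonneg (by rintro _ ⟨φ, -, rfl⟩; positivity)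

lemma norm_sum_smul_sq_le (c : ι → ℝ) :
    ‖∑ i, c i • w i‖ ^ 2 ≤ weakVariance w * ∑ i, c i ^ 2 := by
  have hbdd : BddAbove {s : ℝ | ∃ φ : E →L[ℝ] ℝ, ‖φ‖ ≤ 1 ∧ s = ∑ i, (φ (w i)) ^ 2} := by
    refine ⟨∑ i, ‖w i‖ ^ 2, ?_⟩
    rintro _ ⟨φ, hφ, rfl⟩
    refine sum_le_sum fun i _ => ?_
    rw [sq_le_sq, abs_norm]
    exact (φ.le_opNorm (w i)).trans (mul_le_of_le_one_left (norm_nonneg _) hφ)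
  obtain ⟨φ, hφ, hφv⟩ := exists_dual_vector'' ℝ (∑ i, c i • w i)
  calc ‖∑ i, c i • w i‖ ^ 2 = (∑ i, c i * φ (w i)) ^ 2 := by
        rw [← (by simpa using hφv : φ (∑ i, c i • w i) = ‖∑ i, c i • w i‖), map_sum]
        simp
    _ ≤ (∑ i, c i ^ 2) * ∑ i, (φ (w i)) ^ 2 := sum_mul_sq_le_sq_mul_sq _ _ _
    _ ≤ (∑ i, c i ^ 2) * weakVariance w := by gcongr; exact le_csSup hbdd ⟨φ, hφ, rfl⟩
    _ = weakVariance w * ∑ i, c i ^ 2 := mul_comm _ _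

lemma convexOn_norm_sum_smul : ConvexOn ℝ Set.univ fun v : ι → ℝ => ‖∑ i, v i • w i‖ := by
  simpa [Function.comp_def, Fintype.linearCombination_apply] using
    (convexOn_norm convex_univ).comp_linearMap (Fintype.linearCombination ℝ w)

lemma norm_sum_smul_le_add (u v : ι → ℝ) :
    ‖∑ i, u i • w i‖ ≤ ‖∑ i, v i • w i‖ + √(weakVariance w) * √(∑ i, (u i - v i) ^ 2) := by
  have hdiff : ‖∑ i, (u i - v i) • w i‖ ≤ √(weakVariance w) * √(∑ i, (u i - v i) ^ 2) := by
    rw [← sqrt_mul (weakVariance_nonneg w)]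
    exact le_sqrt_of_sq_le (norm_sum_smul_sq_le w _)
  have htri := norm_le_norm_add_norm_sub' (∑ i, u i • w i) (∑ i, v i • w i)
  simp only [← sum_sub_distrib, ← sub_smul] at htri
  linarith

theorem levelSetProductBound_rademacher {n : ℕ} (w : Fin n → E) (hσ : 0 < weakVariance w) :
    LevelSetProductBound (fun ε => ‖∑ i, signVec ε i • w i‖) (32 * weakVariance w) := by
  have h := levelSetProductBound_of_le_convexDistSq (fun ε => ‖∑ i, signVec ε i • w i‖)
    (L := 2 * √(weakVariance w)) (by positivity)
    (fun m x hA => le_add_mul_sqrt_convexDistSq (convexOn_norm_sum_smul w)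
      (norm_sum_smul_le_add w) hA (fun y hy => (mem_filter.1 hy).2) x)
  rwa [mul_pow, sq_sqrt hσ.le, ← mul_assoc, show (8 : ℝ) * 2 ^ 2 = 32 by norm_num] at h

end Rademacher

end

/-- Talagrand's concentration inequality (expectation form) for
`‖∑ ε_i w_i‖` over uniform signs, with `σ² = sup{∑ φ(w_i)² : ‖φ‖* ≤ 1}`. -/
theorem talagrand_concentration :
    ∃ C₁ > (0:ℝ), ∃ c₁ > (0:ℝ),
      ∀ (E : Type) (_ : NormedAddCommGroup E) (_ : NormedSpace ℝ E)
        (n : ℕ) (w : Fin n → E) (σ2 : ℝ),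
      σ2 = sSup { s : ℝ | ∃ φ : E →L[ℝ] ℝ, ‖φ‖ ≤ 1 ∧ s = ∑ i, (φ (w i)) ^ 2 } →
      ∀ t > (0:ℝ),
        ((Finset.univ.filter (fun ε : Fin n → Bool =>
            t ≤ |‖∑ i, (if ε i then (1:ℝ) else -1) • w i‖ -
              (∑ ε' : Fin n → Bool,
                ‖∑ i, (if ε' i then (1:ℝ) else -1) • w i‖) / 2 ^ n|)).card : ℝ)
            / 2 ^ n
          ≤ C₁ * Real.exp (-c₁ * t ^ 2 / σ2) := by
  refine ⟨exp 64, exp_pos _, 1 / 128, by norm_num, ?_⟩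
  intro E _ _ n w σ2 hσ t ht
  have hcard : (Fintype.card (Fin n → Bool) : ℝ) = 2 ^ n := by simp
  rcases le_or_gt σ2 0 with hσ0 | hσ0
  · calc _ ≤ (1 : ℝ) := by
          rw [div_le_one (by positivity), ← hcard]
          exact_mod_cast card_le_univ _
      _ ≤ exp 64 * exp (-(1 / 128) * t ^ 2 / σ2) :=
          one_le_mul_of_one_le_of_one_le (one_le_exp (by norm_num))
            (one_le_exp (div_nonneg_of_nonpos (by nlinarith) hσ0))
  replace hσ : σ2 = weakVariance w := hσ
  subst hσ
  have h := card_le_abs_sub_mean_div_card_le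
    (fun ε : Fin n → Bool => ‖∑ i, (if ε i then (1 : ℝ) else -1) • w i‖)
    (mul_pos (by norm_num : (0 : ℝ) < 32) hσ0) (levelSetProductBound_rademacher w hσ0) ht.le
  rwa [hcard, show -t ^ 2 / (4 * (32 * weakVariance w)) = -(1 / 128) * t ^ 2 / weakVariance w by
    ring] at h
end

section
/- Let E be a normed space, v_1,...,v_n ∈ E \ {0}, |||x||| = E_ε ‖Σ_i ε_i x_i v_i‖ and σ(x) = sup{ (Σ_i φ(x_i v_i)^2)^{1/2} : ‖φ‖* ≤ 1 }. Fix σ_0 > 0 and suppose the scalar Rudelson event holds: for all real sequences (y_i), (1/N) Σ_j |Σ_i ε_{ij} y_i| ≥ c_4 ξ^2 (Σ_i y_i^2)^{1/2}. Then for every x with |||x||| = 1 and σ(x) ≥ σ_0, |||x|||_N = (1/N) Σ_j ‖Σ_i ε_{ij} x_i v_i‖ ≥ c_4 ξ^2 σ_0. -/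
/-- on the event that the scalar Rudelson lower bound holds, for
every `x` on the `|||·|||`-unit sphere with `σ(x) ≥ σ₀` one has
`|||x|||_N ≥ c₄ ξ² σ₀`. -/
theorem lower_bound_on_U
    {E : Type*} [NormedAddCommGroup E] [NormedSpace ℝ E]
    (n N : ℕ) (v : Fin n → E) (hv : ∀ i, v i ≠ 0)
    (σ T : (Fin n → ℝ) → ℝ)
    (hσ : ∀ x, σ x = sSup { s : ℝ | ∃ φ : E →L[ℝ] ℝ, ‖φ‖ ≤ 1 ∧
        s = Real.sqrt (∑ i, (φ (x i • v i)) ^ 2) })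
    (hT : ∀ x, T x = (∑ ε : Fin n → Bool,
        ‖∑ i, ((if ε i then (1:ℝ) else -1) * x i) • v i‖) / 2 ^ n)
    (c₄ ξ σ₀ : ℝ) (hc₄ : 0 < c₄) (hξ : 0 < ξ) (hσ₀ : 0 < σ₀)
    (ε : Fin n → Fin N → Bool)
    (hscalar : ∀ y : Fin n → ℝ,
      c₄ * ξ ^ 2 * Real.sqrt (∑ i, y i ^ 2)
        ≤ (1 / N : ℝ) * ∑ j, |∑ i, (if ε i j then (1:ℝ) else -1) * y i|) :
    ∀ x : Fin n → ℝ, T x = 1 → σ₀ ≤ σ x →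
      c₄ * ξ ^ 2 * σ₀
        ≤ (1 / N : ℝ) * ∑ j, ‖∑ i, ((if ε i j then (1:ℝ) else -1) * x i) • v i‖ := by
  intro x hTx hσx
  set K : ℝ := (1 / N : ℝ) * ∑ j, ‖∑ i, ((if ε i j then (1:ℝ) else -1) * x i) • v i‖ with hK
  have hcξ : 0 < c₄ * ξ ^ 2 := by positivity
  -- every element of the sup set satisfies the bound
  have key : ∀ s ∈ { s : ℝ | ∃ φ : E →L[ℝ] ℝ, ‖φ‖ ≤ 1 ∧
      s = Real.sqrt (∑ i, (φ (x i • v i)) ^ 2) }, c₄ * ξ ^ 2 * s ≤ K := by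
    rintro s ⟨φ, hφ, rfl⟩
    have h1 := hscalar (fun i => φ (x i • v i))
    refine h1.trans ?_
    rw [hK]
    have hN : (0:ℝ) ≤ (1 / N : ℝ) := by positivity
    apply mul_le_mul_of_nonneg_left _ hN
    apply Finset.sum_le_sum
    intro j _
    have heq : ∑ i, (if ε i j then (1:ℝ) else -1) * φ (x i • v i)
        = φ (∑ i, ((if ε i j then (1:ℝ) else -1) * x i) • v i) := by
      rw [map_sum]
      congr 1
      ext i
      rw [mul_smul, map_smul, map_smul]
      simp [smul_eq_mul]
    rw [heq]
    calc |φ (∑ i, ((if ε i j then (1:ℝ) else -1) * x i) • v i)|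
        ≤ ‖φ‖ * ‖∑ i, ((if ε i j then (1:ℝ) else -1) * x i) • v i‖ := φ.le_opNorm _
      _ ≤ 1 * ‖∑ i, ((if ε i j then (1:ℝ) else -1) * x i) • v i‖ :=
          mul_le_mul_of_nonneg_right hφ (norm_nonneg _)
      _ = _ := one_mul _
  have hne : { s : ℝ | ∃ φ : E →L[ℝ] ℝ, ‖φ‖ ≤ 1 ∧
      s = Real.sqrt (∑ i, (φ (x i • v i)) ^ 2) }.Nonempty := by
    refine ⟨Real.sqrt (∑ i, ((0 : E →L[ℝ] ℝ) (x i • v i)) ^ 2), 0, ?_, rfl⟩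
    simp
  have hsup : σ x ≤ K / (c₄ * ξ ^ 2) := by
    rw [hσ]
    apply csSup_le hne
    intro s hs
    rw [le_div_iff₀ hcξ]
    calc s * (c₄ * ξ ^ 2) = c₄ * ξ ^ 2 * s := by ring
      _ ≤ K := key s hs
  calc c₄ * ξ ^ 2 * σ₀ ≤ c₄ * ξ ^ 2 * σ x := by
        exact mul_le_mul_of_nonneg_left hσx (le_of_lt hcξ)
    _ ≤ c₄ * ξ ^ 2 * (K / (c₄ * ξ ^ 2)) := mul_le_mul_of_nonneg_left hsup (le_of_lt hcξ)
    _ = K := by field_simp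
end
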